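/- arXiv:1301.4889 — 7 statements merged into one kernel-verified Lean document; each statement's English description precedes it below -/
import Mathlib

section
/- Let φ : [0,1] → [0,1] be nondecreasing and continuous with φ(0) > 0 and φ(1−ε) = 1 for some ε ∈ (0,1), and let N ≥ 2 satisfy φ^N ≡ 1. Then for every n ≥ N+1 the iterated integral A_n = ∫₀¹ ∫_{φ(t₁)}^1 ⋯ ∫_{φ(t_{n−1})}^1 dt_n ⋯ dt₁ equals 0. -/
open Set intervalIntegral

/-!
Write `A_n = ∫₀¹ G_{n-1}`, where `G_{k+1}(t) = ∫_{φ(t)}^1 G_k`. If `φ^[k+1] t = 1` then `G_j t = 0`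
for every `j > k`: for `k = 0` the outer integral runs over `[1, 1]`, and otherwise every `s` in
`[φ t, 1]` satisfies `φ^[k] s ≥ φ^[k+1] t = 1` by monotonicity, so the integrand vanishes.
Since `φ^[N] ≡ 1`, `G_{n-1}` vanishes on `[0, 1]` as soon as `n - 1 ≥ N`.
-/

theorem MonotoneOn.iterate {α : Type*} [Preorder α] {f : α → α} {s : Set α}
    (hf : MonotoneOn f s) (hs : MapsTo f s s) : ∀ n, MonotoneOn f^[n] s
  | 0 => monotoneOn_id
  | n + 1 => by
    rw [Function.iterate_succ]
    exact (hf.iterate hs n).comp hf hs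

theorem intervalIntegral.integral_eq_zero_of_eqOn_Icc {f : ℝ → ℝ} {a b : ℝ} (hab : a ≤ b)
    (hf : EqOn f 0 (Icc a b)) : ∫ x in a..b, f x = 0 := by
  rw [integral_congr (g := fun _ ↦ 0) (by rwa [uIcc_of_le hab]), integral_zero]

theorem iteratedIntegral_eq_zero_of_iterate_eq_one {φ : ℝ → ℝ} {G : ℕ → ℝ → ℝ}
    (hmaps : MapsTo φ (Icc 0 1) (Icc 0 1)) (hmono : MonotoneOn φ (Icc 0 1))
    (hGsucc : ∀ k t, G (k + 1) t = ∫ s in (φ t)..1, G k s) :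
    ∀ k, ∀ t ∈ Icc (0:ℝ) 1, φ^[k + 1] t = 1 → ∀ j, k < j → G j t = 0 := by
  intro k
  induction k with
  | zero =>
    rintro t - ht j hj
    obtain ⟨i, rfl⟩ := Nat.exists_eq_add_of_lt hj
    rw [hGsucc, show φ t = 1 from ht, integral_same]
  | succ k ih =>
    rintro t ht hkt j hj
    obtain ⟨i, rfl⟩ := Nat.exists_eq_add_of_lt hj
    have hφt := hmaps ht
    rw [hGsucc]
    refine integral_eq_zero_of_eqOn_Icc hφt.2 fun s hs ↦ ?_
    have hs01 : s ∈ Icc (0:ℝ) 1 := ⟨hφt.1.trans hs.1, hs.2⟩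
    refine ih s hs01 (le_antisymm (hmaps.iterate _ hs01).2 ?_) _ (by omega)
    calc (1:ℝ) = φ^[k + 1] (φ t) := by rw [← hkt, Function.iterate_succ_apply]
      _ ≤ φ^[k + 1] s := hmono.iterate hmaps _ hφt hs01 hs.1

theorem stmt_2_general (φ : ℝ → ℝ)
    (hmaps : MapsTo φ (Icc 0 1) (Icc 0 1))
    (hmono : MonotoneOn φ (Icc 0 1))
    (N : ℕ) (hN : 2 ≤ N) (hiter : ∀ x ∈ Icc (0:ℝ) 1, φ^[N] x = 1)
    (G : ℕ → ℝ → ℝ)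
    (hGsucc : ∀ k t, G (k + 1) t = ∫ s in (φ t)..1, G k s) :
    ∀ n, N + 1 ≤ n → (∫ t in (0:ℝ)..1, G (n - 1) t) = 0 := by
  intro n hn
  obtain ⟨k, rfl⟩ : ∃ k, N = k + 1 := ⟨N - 1, by omega⟩
  exact integral_eq_zero_of_eqOn_Icc zero_le_one fun t ht ↦
    iteratedIntegral_eq_zero_of_iterate_eq_one hmaps hmono hGsucc k t ht (hiter t ht) _ (by omega)

/-- If `φ^N ≡ 1` on `[0,1]` then the iterated integral
`A_n = ∫₀¹ ∫_{φ(t₁)}^1 ⋯ ∫_{φ(t_{n−1})}^1 dt_n ⋯ dt₁` vanishes for `n ≥ N + 1`.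
Here `G k t` encodes the inner `k`-fold iterated integral starting from `t`. -/
theorem stmt_2 (φ : ℝ → ℝ)
    (hcont : ContinuousOn φ (Icc 0 1))
    (hmaps : MapsTo φ (Icc 0 1) (Icc 0 1))
    (hmono : MonotoneOn φ (Icc 0 1))
    (hgt : ∀ x ∈ Ioo (0:ℝ) 1, x < φ x)
    (h0 : 0 < φ 0) (ε : ℝ) (hε : ε ∈ Ioo (0:ℝ) 1) (h1 : φ (1 - ε) = 1)
    (N : ℕ) (hN : 2 ≤ N) (hiter : ∀ x ∈ Icc (0:ℝ) 1, φ^[N] x = 1)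
    (G : ℕ → ℝ → ℝ)
    (hG0 : ∀ t, G 0 t = 1)
    (hGsucc : ∀ k t, G (k + 1) t = ∫ s in (φ t)..1, G k s) :
    ∀ n, N + 1 ≤ n → (∫ t in (0:ℝ)..1, G (n - 1) t) = 0 :=
  stmt_2_general φ hmaps hmono N hN hiter G hGsucc
end

section
/- Let β > 1 and define ψ₂(x) = ε + (1−2ε)^{1−β}(x−ε)^β for x ∈ [ε, 1−ε], where 0 < ε ≤ 1/4. Define iterated integrals b̃₁(x) = (1−2ε)^{1−β}(x−ε)^β and b̃_{l+1}(x) = ∫_ε^{ψ₂(x)} b̃_l(t) dt. Then for all l ≥ 2, b̃_l(x) = (1−2ε)^{l−β−β²−⋯−β^l} (x−ε)^{β+β²+⋯+β^l} / ((1+β)(1+β+β²)⋯(1+β+⋯+β^{l−1})). -/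
open Set intervalIntegral Finset

/-!
By induction `b̃_l(x) = C_l (x - ε)^{S_l}` with `S_l = β + ⋯ + βˡ`. Since
`∫_ε^y (t - ε)^S dt = (y - ε)^{S+1} / (S + 1)` and `ψ₂(x) - ε = (1 - 2ε)^{1-β} (x - ε)^β`,
one more integration gives exponent `S_{l+1} = β (S_l + 1)`, multiplies the constant by
`(1 - 2ε)^{(1-β)(S_l+1)}` and divides it by `S_l + 1 = 1 + β + ⋯ + βˡ`.
-/

theorem sum_range_succ_pow_eq_sum_Icc_one_add_one {R : Type*} [Semiring R] (x : R) (l : ℕ) :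
    ∑ j ∈ range (l + 1), x ^ j = ∑ j ∈ Icc 1 l, x ^ j + 1 := by
  rw [sum_range_succ', ← Finset.Ico_add_one_right_eq_Icc, sum_Ico_eq_sum_range]
  simp only [add_tsub_cancel_right, add_comm 1, pow_zero]

theorem sum_Icc_one_pow_succ {R : Type*} [Semiring R] (x : R) (l : ℕ) :
    ∑ j ∈ Icc 1 (l + 1), x ^ j = x * (∑ j ∈ Icc 1 l, x ^ j + 1) := by
  rw [← sum_range_succ_pow_eq_sum_Icc_one_add_one, ← Finset.Ico_add_one_right_eq_Icc,
    sum_Ico_eq_sum_range, mul_sum, add_tsub_cancel_right]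
  simp only [add_comm 1, pow_succ']

theorem integral_sub_rpow {a y p : ℝ} (hp : -1 < p) :
    ∫ t in a..y, (t - a) ^ p = (y - a) ^ (p + 1) / (p + 1) := by
  rw [integral_comp_sub_right (fun t ↦ t ^ p), sub_self, integral_rpow (Or.inl hp),
    Real.zero_rpow (by linarith), sub_zero]

noncomputable def powerExponent (β : ℝ) (l : ℕ) : ℝ := ∑ j ∈ Icc 1 l, β ^ j

/-- `(1 + β)(1 + β + β²)⋯(1 + β + ⋯ + βˡ⁻¹)`, the denominator of `b̃_l`. -/
noncomputable def powerDenominator (β : ℝ) (l : ℕ) : ℝ :=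
  ∏ k ∈ range (l - 1), ∑ j ∈ range (k + 2), β ^ j

section
variable {β : ℝ}

theorem powerExponent_succ (l : ℕ) : powerExponent β (l + 1) = β * (powerExponent β l + 1) :=
  sum_Icc_one_pow_succ β l

theorem powerExponent_nonneg (hβ : 0 ≤ β) (l : ℕ) : 0 ≤ powerExponent β l :=
  sum_nonneg fun j _ ↦ pow_nonneg hβ j

theorem powerDenominator_succ {l : ℕ} (hl : 1 ≤ l) :
    powerDenominator β (l + 1) = powerDenominator β l * (powerExponent β l + 1) := by
  obtain ⟨m, rfl⟩ := Nat.exists_eq_add_of_le' hl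
  rw [powerDenominator, powerDenominator, Nat.add_sub_cancel, Nat.add_sub_cancel, prod_range_succ,
    powerExponent, ← sum_range_succ_pow_eq_sum_Icc_one_add_one]

end

theorem integral_eq_of_forall_ge_eq_mul_sub_rpow {f : ℝ → ℝ} {a y C p : ℝ} (hp : -1 < p)
    (hy : a ≤ y) (hf : ∀ t, a ≤ t → f t = C * (t - a) ^ p) :
    ∫ t in a..y, f t = C * ((y - a) ^ (p + 1) / (p + 1)) := by
  rw [integral_congr (g := fun t ↦ C * (t - a) ^ p) fun t ht ↦ hf t (uIcc_of_le hy ▸ ht).1,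
    integral_const_mul, integral_sub_rpow hp]

open Real in
theorem iterated_integral_eq {β a q : ℝ} (hβ : 0 ≤ β) (hq : 0 < q) (b : ℕ → ℝ → ℝ)
    (hb1 : ∀ x, b 1 x = q ^ ((1 : ℝ) - β) * (x - a) ^ β)
    (hbsucc : ∀ l x, b (l + 1) x = ∫ t in a..(a + q ^ ((1 : ℝ) - β) * (x - a) ^ β), b l t)
    {l : ℕ} (hl : 1 ≤ l) {x : ℝ} (hx : a ≤ x) :
    b l x = q ^ ((l : ℝ) - powerExponent β l) * (x - a) ^ powerExponent β l /
      powerDenominator β l := by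
  induction l, hl using Nat.le_induction generalizing x with
  | base => simp [hb1, powerExponent, powerDenominator]
  | succ l hl ih =>
    rw [hbsucc, powerExponent_succ, powerDenominator_succ hl]
    set S := powerExponent β l
    have hxa : 0 ≤ x - a := sub_nonneg.mpr hx
    have hc : 0 ≤ q ^ ((1 : ℝ) - β) := rpow_nonneg hq.le _
    have hy : a ≤ a + q ^ ((1 : ℝ) - β) * (x - a) ^ β :=
      le_add_of_nonneg_right (mul_nonneg hc (rpow_nonneg hxa β))
    have hq_exp :
        q ^ ((↑(l + 1) : ℝ) - β * (S + 1)) =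
          q ^ ((l : ℝ) - S) * q ^ ((1 - β) * (S + 1)) := by
      rw [← rpow_add hq]
      push_cast
      ring_nf
    rw [integral_eq_of_forall_ge_eq_mul_sub_rpow (C := q ^ ((l : ℝ) - S) / powerDenominator β l)
      (p := S) (by linarith [powerExponent_nonneg hβ l]) hy fun t ht ↦ by rw [ih ht]; ring,
      add_sub_cancel_left, mul_rpow hc (rpow_nonneg hxa β), ← rpow_mul hq.le, ← rpow_mul hxa,
      hq_exp, div_mul_div_comm, mul_assoc]

theorem stmt_5_general (β ε : ℝ) (hβ : 1 < β) (hε' : ε ≤ 1 / 4)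
    (bt : ℕ → ℝ → ℝ)
    (hbt1 : ∀ x, bt 1 x = (1 - 2 * ε) ^ ((1 : ℝ) - β) * (x - ε) ^ β)
    (hbtsucc : ∀ l x, bt (l + 1) x =
      ∫ t in ε..(ε + (1 - 2 * ε) ^ ((1 : ℝ) - β) * (x - ε) ^ β), bt l t) :
    ∀ l, 2 ≤ l → ∀ x ∈ Icc ε (1 - ε),
      bt l x =
        (1 - 2 * ε) ^ ((l : ℝ) - ∑ j ∈ Finset.Icc 1 l, β ^ j) *
            (x - ε) ^ (∑ j ∈ Finset.Icc 1 l, β ^ j) /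
          ∏ k ∈ Finset.range (l - 1), ∑ j ∈ Finset.range (k + 2), β ^ j := by
  intro l hl x hx
  exact iterated_integral_eq (by linarith) (by linarith) bt hbt1 hbtsucc (by omega) hx.1

theorem stmt_5 (β ε : ℝ) (hβ : 1 < β) (hε : 0 < ε) (hε' : ε ≤ 1 / 4)
    (bt : ℕ → ℝ → ℝ)
    (hbt1 : ∀ x, bt 1 x = (1 - 2 * ε) ^ ((1 : ℝ) - β) * (x - ε) ^ β)
    (hbtsucc : ∀ l x, bt (l + 1) x =
      ∫ t in ε..(ε + (1 - 2 * ε) ^ ((1 : ℝ) - β) * (x - ε) ^ β), bt l t) :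
    ∀ l, 2 ≤ l → ∀ x ∈ Icc ε (1 - ε),
      bt l x =
        (1 - 2 * ε) ^ ((l : ℝ) - ∑ j ∈ Finset.Icc 1 l, β ^ j) *
            (x - ε) ^ (∑ j ∈ Finset.Icc 1 l, β ^ j) /
          ∏ k ∈ Finset.range (l - 1), ∑ j ∈ Finset.range (k + 2), β ^ j :=
  stmt_5_general β ε hβ hε' bt hbt1 hbtsucc
end

section
/- Let β > 1 and let a₀ = 1, a₁ = 1/2, and a_l = 2^{−l}/((β+1)(β²+β+1)⋯(β^{l−1}+⋯+β+1)) for l ≥ 2, and set d_n = Σ_{l=0}^n a_l a_{n−l}. Then d_n < β^{(−n²/2+n)/4} / n! for all n ≥ 1. -/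
open Finset
open scoped Nat

/-! Pairing `β ^ j` with `β ^ (m - j)` (AM–GM) gives
`1 + β + ⋯ + β ^ m ≥ (m + 1) β ^ (m / 2)`, so the denominator of `a_l` is at least
`l! β ^ (l (l - 1) / 4)` and `a_l ≤ b_l := β ^ (-l (l - 1) / 4) / (2 ^ l l!)`.
For the majorant the convolution is explicit,
`b_l b_(n-l) = β ^ (-(l (l - 1) + (n - l) (n - l - 1)) / 4) C(n, l) / (2 ^ n n!)`,
and since `l² + (n - l)² ≥ n² / 2` each exponent is at most `(-n² / 2 + n) / 4`,
strictly so at `l = 0`. Summing `C(n, l)` to `2 ^ n` gives the bound. -/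

theorem add_one_mul_pow_le_sum_sq_pow {R : Type*} [CommRing R] [LinearOrder R]
    [IsStrictOrderedRing R] (s : R) (m : ℕ) :
    (m + 1) * s ^ m ≤ ∑ j ∈ range (m + 1), (s ^ 2) ^ j := by
  have hpair : ∀ j ∈ range (m + 1), 2 * s ^ m ≤ (s ^ 2) ^ j + (s ^ 2) ^ (m - j) := by
    intro j hj
    have hsplit : s ^ j * s ^ (m - j) = s ^ m := by
      rw [← pow_add, Nat.add_sub_cancel' (Nat.lt_succ_iff.mp (mem_range.mp hj))]
    rw [pow_right_comm s 2 j, pow_right_comm s 2 (m - j)]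
    nlinarith [sq_nonneg (s ^ j - s ^ (m - j))]
  have hreflect :
      ∑ j ∈ range (m + 1), (s ^ 2) ^ (m - j) = ∑ j ∈ range (m + 1), (s ^ 2) ^ j := by
    simpa using sum_range_reflect (fun j => (s ^ 2) ^ j) (m + 1)
  have h := sum_le_sum hpair
  rw [sum_add_distrib, hreflect, sum_const, card_range, nsmul_eq_mul] at h
  push_cast at h
  nlinarith

theorem add_one_mul_rpow_half_le_geom_sum {β : ℝ} (hβ : 0 ≤ β) (m : ℕ) :
    (m + 1) * β ^ ((m : ℝ) / 2) ≤ ∑ j ∈ range (m + 1), β ^ j := by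
  simpa [Real.rpow_div_two_eq_sqrt _ hβ, Real.sq_sqrt hβ] using
    add_one_mul_pow_le_sum_sq_pow (√β) m

theorem succ_factorial_mul_rpow_le_prod_geom_sum {β : ℝ} (hβ : 0 < β) (n : ℕ) :
    ((n + 1)! : ℝ) * β ^ ((n : ℝ) * (n + 1) / 4) ≤
      ∏ k ∈ range n, ∑ j ∈ range (k + 2), β ^ j := by
  induction n with
  | zero => simp
  | succ n ih =>
    calc (((n + 1 + 1)! : ℕ) : ℝ) * β ^ (((n + 1 : ℕ) : ℝ) * ((n + 1 : ℕ) + 1) / 4)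
        = ((n + 1)! * β ^ ((n : ℝ) * (n + 1) / 4)) *
            ((n + 1 + 1) * β ^ (((n + 1 : ℕ) : ℝ) / 2)) := by
          rw [mul_mul_mul_comm, ← Real.rpow_add hβ, Nat.factorial_succ (n + 1)]
          push_cast
          ring_nf
      _ ≤ (∏ k ∈ range n, ∑ j ∈ range (k + 2), β ^ j) *
            ∑ j ∈ range (n + 1 + 1), β ^ j := by
          refine mul_le_mul ih ?_ (by positivity) (prod_nonneg fun k _ => by positivity)
          exact_mod_cast add_one_mul_rpow_half_le_geom_sum hβ.le (n + 1)
      _ = _ := (prod_range_succ _ n).symm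

/-- For `l = 0, 1` the product is empty (`l - 1` truncates), so this also gives `a₀ = 1` and
`a₁ = 1 / 2`. -/
noncomputable def coeff (β : ℝ) (l : ℕ) : ℝ :=
  2 ^ (-(l : ℤ)) / ∏ k ∈ range (l - 1), ∑ j ∈ range (k + 2), β ^ j

noncomputable def coeffBound (β : ℝ) (l : ℕ) : ℝ :=
  β ^ (-((l : ℝ) * (l - 1)) / 4) / (2 ^ l * l !)

theorem coeff_nonneg {β : ℝ} (hβ : 0 ≤ β) (l : ℕ) : 0 ≤ coeff β l :=
  div_nonneg (by positivity) (prod_nonneg fun _ _ => sum_nonneg fun _ _ => by positivity)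

theorem coeffBound_nonneg {β : ℝ} (hβ : 0 ≤ β) (l : ℕ) : 0 ≤ coeffBound β l := by
  unfold coeffBound; positivity

theorem coeff_le_coeffBound {β : ℝ} (hβ : 0 < β) (l : ℕ) :
    coeff β l ≤ coeffBound β l := by
  rcases l with _ | n
  · simp [coeff, coeffBound]
  · have hprod := succ_factorial_mul_rpow_le_prod_geom_sum hβ n
    calc coeff β (n + 1)
        ≤ (2 ^ (n + 1))⁻¹ / ((n + 1)! * β ^ ((n : ℝ) * (n + 1) / 4)) := by
          rw [coeff, zpow_neg, zpow_natCast, Nat.add_sub_cancel]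
          gcongr
      _ = coeffBound β (n + 1) := by
          rw [coeffBound, neg_div, Real.rpow_neg hβ.le]
          push_cast
          field_simp
          ring_nf

theorem coeffBound_mul_coeffBound {β : ℝ} (hβ : 0 < β) {l n : ℕ} (hl : l ≤ n) :
    coeffBound β l * coeffBound β (n - l) =
      β ^ (-((l : ℝ) * (l - 1) + (n - l) * (n - l - 1)) / 4) * n.choose l / (2 ^ n * n !) := by
  rw [coeffBound, coeffBound, div_mul_div_comm, ← Real.rpow_add hβ, Nat.cast_choose ℝ hl,
    Nat.cast_sub hl]
  have : (2 : ℝ) ^ n = 2 ^ l * 2 ^ (n - l) := by rw [← pow_add, Nat.add_sub_cancel' hl]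
  rw [this]
  field_simp
  ring_nf

theorem coeffBound_mul_coeffBound_le {β : ℝ} (hβ : 1 ≤ β) {l n : ℕ} (hl : l ≤ n) :
    coeffBound β l * coeffBound β (n - l) ≤
      β ^ ((-(n : ℝ) ^ 2 / 2 + n) / 4) * n.choose l / (2 ^ n * n !) := by
  rw [coeffBound_mul_coeffBound (by linarith) hl]
  gcongr ?_ * _ / _
  exact Real.rpow_le_rpow_of_exponent_le hβ (by nlinarith [sq_nonneg (2 * (l : ℝ) - n)])

theorem coeffBound_lt {β : ℝ} (hβ : 1 < β) {n : ℕ} (hn : 1 ≤ n) :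
    coeffBound β n < β ^ ((-(n : ℝ) ^ 2 / 2 + n) / 4) / (2 ^ n * n !) := by
  have hn' : (1 : ℝ) ≤ n := by exact_mod_cast hn
  rw [coeffBound]
  gcongr ?_ / _
  exact Real.rpow_lt_rpow_of_exponent_lt hβ (by nlinarith)

theorem sum_coeffBound_mul_coeffBound_lt {β : ℝ} (hβ : 1 < β) {n : ℕ} (hn : 1 ≤ n) :
    ∑ l ∈ range (n + 1), coeffBound β l * coeffBound β (n - l) <
      β ^ ((-(n : ℝ) ^ 2 / 2 + n) / 4) / n ! := by
  have hlt : coeffBound β 0 * coeffBound β (n - 0) <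
      β ^ ((-(n : ℝ) ^ 2 / 2 + n) / 4) * n.choose 0 / (2 ^ n * n !) := by
    simpa [coeffBound] using coeffBound_lt hβ hn
  calc ∑ l ∈ range (n + 1), coeffBound β l * coeffBound β (n - l)
      < ∑ l ∈ range (n + 1), β ^ ((-(n : ℝ) ^ 2 / 2 + n) / 4) * n.choose l / (2 ^ n * n !) :=
        sum_lt_sum (fun l hl => coeffBound_mul_coeffBound_le hβ.le (mem_range_succ_iff.mp hl))
          ⟨0, mem_range.mpr n.succ_pos, hlt⟩
    _ = β ^ ((-(n : ℝ) ^ 2 / 2 + n) / 4) / n ! := by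
        rw [← sum_div, ← mul_sum, ← Nat.cast_sum, Nat.sum_range_choose]
        push_cast
        field_simp

theorem stmt_9 (β : ℝ) (hβ : 1 < β)
    (a : ℕ → ℝ)
    (ha0 : a 0 = 1) (ha1 : a 1 = 1 / 2)
    (ha : ∀ l, 2 ≤ l → a l =
      2 ^ (-(l : ℤ)) / ∏ k ∈ Finset.range (l - 1), ∑ j ∈ Finset.range (k + 2), β ^ j)
    (d : ℕ → ℝ)
    (hd : ∀ n, d n = ∑ l ∈ Finset.range (n + 1), a l * a (n - l)) :
    ∀ n, 1 ≤ n →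
      d n < β ^ ((-(n : ℝ) ^ 2 / 2 + (n : ℝ)) / 4) / (n.factorial : ℝ) := by
  have hβ0 : 0 < β := by linarith
  have ha_eq : a = coeff β := by
    funext l
    rcases l with _ | _ | l
    · simp [coeff, ha0]
    · simp [coeff, ha1]
    · exact ha _ (by omega)
  subst ha_eq
  intro n hn
  rw [hd]
  calc ∑ l ∈ range (n + 1), coeff β l * coeff β (n - l)
      ≤ ∑ l ∈ range (n + 1), coeffBound β l * coeffBound β (n - l) :=
        sum_le_sum fun l _ => mul_le_mul (coeff_le_coeffBound hβ0 l)
          (coeff_le_coeffBound hβ0 (n - l)) (coeff_nonneg hβ0.le _) (coeffBound_nonneg hβ0.le l)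
    _ < _ := sum_coeffBound_mul_coeffBound_lt hβ hn
end

section
/- For each α ∈ (0,1) and each n ≥ 1, the iterated integral ∫₀¹ ∫_{t₁^α}^1 ⋯ ∫_{t_{n−1}^α}^1 dt_n ⋯ dt₁ equals α^{n(n−1)/2}(1−α)^n / ((1−α)(1−α²)⋯(1−α^n)). -/
/-!
Write `[n]_q = 1 + q + ⋯ + q^(n-1)` and `[n]_q! = [1]_q ⋯ [n]_q`. By induction on `n`, the iterated
integral `G n t` equals `∑_{i+j=n} (-1)^i α^C(j,2) / ([i]_α! [j]_α!) · t^(α + α² + ⋯ + α^i)`: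
integrating `s^(α [i]_α)` from `t^α` to `1` gives `(1 - t^(α [i+1]_α)) / [i+1]_α`, which shifts `i`,
and the new constant term is forced by the q-binomial identity
`∑_{i+j=n} (-1)^i q^C(j,2) / ([i]_q! [j]_q!) = 0` for `n ≥ 1` (that is, `G n 1 = 0`), which follows
from `[i+j]_q = [i]_q + q^i [j]_q` by induction. The integral of the theorem is `G n 0`, the term
`i = 0`, and `∏_{k ≤ n} (1 - α^k) = (1 - α)^n [n]_α!`.
-/

open Set intervalIntegral Finset

section qAnalogues

variable {K : Type*} [Field K]

def qNum (q : K) (n : ℕ) : K := ∑ i ∈ range n, q ^ i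

def qFactorial (q : K) (n : ℕ) : K := ∏ i ∈ range n, qNum q (i + 1)

lemma qNum_zero (q : K) : qNum q 0 = 0 := rfl

lemma qNum_succ (q : K) (n : ℕ) : qNum q (n + 1) = q * qNum q n + 1 := geom_sum_succ

lemma qNum_add (q : K) (m n : ℕ) : qNum q (m + n) = qNum q m + q ^ m * qNum q n := by
  simp only [qNum, sum_range_add, pow_add, mul_sum]

lemma one_sub_mul_qNum (q : K) (n : ℕ) : (1 - q) * qNum q n = 1 - q ^ n := mul_neg_geom_sum q n

lemma qFactorial_zero (q : K) : qFactorial q 0 = 1 := rfl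

lemma qFactorial_succ (q : K) (n : ℕ) : qFactorial q (n + 1) = qFactorial q n * qNum q (n + 1) :=
  prod_range_succ _ _

lemma prod_Icc_one_sub_pow (q : K) (n : ℕ) :
    ∏ k ∈ Icc 1 n, (1 - q ^ k) = (1 - q) ^ n * qFactorial q n := by
  induction n with
  | zero => simp [qFactorial_zero]
  | succ n ih =>
    rw [prod_Icc_succ_top (by omega), ih, qFactorial_succ, ← one_sub_mul_qNum]
    ring

def qCoeff (q : K) (i j : ℕ) : K := (-1) ^ i * q ^ j.choose 2 / (qFactorial q i * qFactorial q j)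

variable {q : K}

lemma qFactorial_ne_zero (hq : ∀ n, qNum q (n + 1) ≠ 0) (n : ℕ) : qFactorial q n ≠ 0 :=
  prod_ne_zero_iff.2 fun i _ => hq i

lemma qNum_succ_mul_qCoeff_succ_left (hq : ∀ n, qNum q (n + 1) ≠ 0) (i j : ℕ) :
    qNum q (i + 1) * qCoeff q (i + 1) j = -qCoeff q i j := by
  simp only [qCoeff, qFactorial_succ]
  field_simp [hq i, qFactorial_ne_zero hq i, qFactorial_ne_zero hq j]
  ring

lemma qNum_succ_mul_qCoeff_succ_right (hq : ∀ n, qNum q (n + 1) ≠ 0) (i j : ℕ) :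
    q ^ i * qNum q (j + 1) * qCoeff q i (j + 1) = q ^ (i + j) * qCoeff q i j := by
  simp only [qCoeff, qFactorial_succ, Nat.choose_succ_succ', Nat.choose_one_right]
  field_simp [hq j, qFactorial_ne_zero hq i, qFactorial_ne_zero hq j]
  ring

lemma qNum_succ_mul_sum_qCoeff (hq : ∀ n, qNum q (n + 1) ≠ 0) (n : ℕ) :
    qNum q (n + 1) * ∑ p ∈ antidiagonal (n + 1), qCoeff q p.1 p.2 =
      (q ^ n - 1) * ∑ p ∈ antidiagonal n, qCoeff q p.1 p.2 := by
  have split : ∀ p ∈ (antidiagonal (n + 1) : Finset (ℕ × ℕ)), qNum q (n + 1) * qCoeff q p.1 p.2 =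
      qNum q p.1 * qCoeff q p.1 p.2 + q ^ p.1 * qNum q p.2 * qCoeff q p.1 p.2 := by
    intro p hp
    rw [← mem_antidiagonal.1 hp, qNum_add]
    ring
  rw [mul_sum, sum_congr rfl split, sum_add_distrib, Nat.sum_antidiagonal_succ,
    Nat.sum_antidiagonal_succ' (f := fun p => q ^ p.1 * qNum q p.2 * qCoeff q p.1 p.2)]
  simp only [qNum_zero, zero_mul, mul_zero, zero_add, qNum_succ_mul_qCoeff_succ_left hq,
    qNum_succ_mul_qCoeff_succ_right hq]
  rw [sum_neg_distrib, ← Nat.sum_antidiagonal_subst (f := fun p k => q ^ k * qCoeff q p.1 p.2),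
    ← mul_sum]
  ring

theorem sum_antidiagonal_qCoeff_eq_zero (hq : ∀ n, qNum q (n + 1) ≠ 0) :
    ∀ {n : ℕ}, n ≠ 0 → ∑ p ∈ antidiagonal n, qCoeff q p.1 p.2 = 0
  | 1, _ => by simpa [hq 0] using qNum_succ_mul_sum_qCoeff hq 0
  | m + 2, _ => by
    have step := qNum_succ_mul_sum_qCoeff hq (m + 1)
    rw [sum_antidiagonal_qCoeff_eq_zero hq m.succ_ne_zero, mul_zero] at step
    exact (mul_eq_zero.1 step).resolve_left (hq _)

end qAnalogues

section IteratedIntegral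

noncomputable def iterIntegralExpansion (α : ℝ) (n : ℕ) (t : ℝ) : ℝ :=
  ∑ p ∈ antidiagonal n, qCoeff α p.1 p.2 * t ^ (α * qNum α p.1)

variable {α : ℝ}

lemma qNum_pos (hα : 0 ≤ α) {n : ℕ} (hn : n ≠ 0) : 0 < qNum α n := geom_sum_pos hα hn

lemma neg_one_lt_mul_qNum (hα : 0 ≤ α) (i : ℕ) : -1 < α * qNum α i := by
  linarith [qNum_succ α i, qNum_pos hα i.succ_ne_zero]

lemma integral_qCoeff_mul_rpow (hα : 0 ≤ α) {t : ℝ} (ht : 0 ≤ t) (i j : ℕ) :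
    ∫ s in t ^ α..1, qCoeff α i j * s ^ (α * qNum α i) =
      qCoeff α (i + 1) j * t ^ (α * qNum α (i + 1)) - qCoeff α (i + 1) j := by
  have hq : ∀ n, qNum α (n + 1) ≠ 0 := fun n => (qNum_pos hα n.succ_ne_zero).ne'
  rw [integral_const_mul, integral_rpow (Or.inl (neg_one_lt_mul_qNum hα i)), ← qNum_succ,
    Real.one_rpow, ← Real.rpow_mul ht, ← neg_neg (qCoeff α i j),
    ← qNum_succ_mul_qCoeff_succ_left hq]
  field_simp [hq i]
  ring

lemma integral_iterIntegralExpansion (hα : 0 ≤ α) {t : ℝ} (ht : 0 ≤ t) (n : ℕ) :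
    ∫ s in t ^ α..1, iterIntegralExpansion α n s = iterIntegralExpansion α (n + 1) t := by
  have hint : ∀ p ∈ (antidiagonal n : Finset (ℕ × ℕ)), IntervalIntegrable
      (fun s => qCoeff α p.1 p.2 * s ^ (α * qNum α p.1)) MeasureTheory.volume (t ^ α) 1 :=
    fun p _ => (intervalIntegrable_rpow' (neg_one_lt_mul_qNum hα p.1)).const_mul _
  have hsum := sum_antidiagonal_qCoeff_eq_zero (fun n => (qNum_pos hα n.succ_ne_zero).ne')
    n.succ_ne_zero
  rw [Nat.sum_antidiagonal_succ] at hsum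
  simp only [iterIntegralExpansion]
  rw [integral_finsetSum hint,
    sum_congr rfl fun p _ => integral_qCoeff_mul_rpow hα ht p.1 p.2, sum_sub_distrib,
    Nat.sum_antidiagonal_succ, qNum_zero, mul_zero, Real.rpow_zero, mul_one]
  linarith

lemma eq_iterIntegralExpansion (hα : 0 ≤ α) (G : ℕ → ℝ → ℝ) (hG0 : ∀ t, G 0 t = 1)
    (hGsucc : ∀ k t, G (k + 1) t = ∫ s in (t ^ α)..1, G k s) (n : ℕ) {t : ℝ} (ht : 0 ≤ t) :
    G n t = iterIntegralExpansion α n t := by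
  induction n generalizing t with
  | zero => simp [hG0, iterIntegralExpansion, qCoeff, qFactorial_zero, qNum_zero]
  | succ n ih =>
    rw [hGsucc, ← integral_iterIntegralExpansion hα ht]
    refine integral_congr fun s hs => ih ?_
    exact le_trans (le_min (Real.rpow_nonneg ht α) zero_le_one) hs.1

lemma iterIntegralExpansion_zero_right (hα : 0 < α) (n : ℕ) :
    iterIntegralExpansion α n 0 = qCoeff α 0 n := by
  rw [iterIntegralExpansion, sum_eq_single_of_mem (0, n) (by simp)]
  · simp [qNum_zero]
  · rintro ⟨i, j⟩ hp hne
    have hi : i ≠ 0 := by rintro rfl; simp_all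
    rw [Real.zero_rpow (mul_pos hα (qNum_pos hα.le hi)).ne', mul_zero]

end IteratedIntegral

/-- For `φ(t) = t^α`, the iterated integral
`∫₀¹ ∫_{t₁^α}^1 ⋯ ∫_{t_{n−1}^α}^1 dt_n ⋯ dt₁` equals
`α^{n(n−1)/2} (1−α)^n / ((1−α)(1−α²)⋯(1−α^n))`. -/
theorem stmt_11 (α : ℝ) (hα : α ∈ Ioo (0:ℝ) 1)
    (G : ℕ → ℝ → ℝ)
    (hG0 : ∀ t, G 0 t = 1)
    (hGsucc : ∀ k t, G (k + 1) t = ∫ s in (t ^ α)..1, G k s) :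
    ∀ n : ℕ, 1 ≤ n →
      (∫ t in (0:ℝ)..1, G (n - 1) t) =
        α ^ (n * (n - 1) / 2) * (1 - α) ^ n /
          ∏ k ∈ Finset.Icc 1 n, (1 - α ^ k) := by
  obtain ⟨hα0, hα1⟩ := hα
  intro n hn
  obtain ⟨m, rfl⟩ := Nat.exists_eq_add_of_le' hn
  have hG := hGsucc m 0
  rw [Real.zero_rpow hα0.ne'] at hG
  have h1α : 1 - α ≠ 0 := by linarith
  have hfact := qFactorial_ne_zero (fun k => (qNum_pos hα0.le k.succ_ne_zero).ne') (m + 1)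
  rw [Nat.add_sub_cancel, ← hG, eq_iterIntegralExpansion hα0.le G hG0 hGsucc _ le_rfl,
    iterIntegralExpansion_zero_right hα0, qCoeff, prod_Icc_one_sub_pow, Nat.choose_two_right,
    Nat.add_sub_cancel, qFactorial_zero]
  field_simp
end

section
/- For α ∈ (0,1), the power series 1 + Σ_{n=1}^∞ (−λ)^n α^{n(n−1)/2}(1−α)^n / ((1−α)(1−α²)⋯(1−α^n)) equals the infinite product ∏_{n=1}^∞ (1 − λ(1−α)α^{n−1}) for all λ ∈ ℂ (both sides being entire functions of λ). -/
/-!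
Write `F(w) = ∑ (-w)^n q^(n(n-1)/2) / ((1-q)⋯(1-q^n))`, so the theorem is the case `q = α`,
`w = λ(1-α)` of `F(w) = ∏ (1 - w q^n)` for `‖q‖ < 1`. The terms satisfy
`(1 - q^(n+1)) T_(n+1)(w) = -w T_n(qw)`, and summing this over `n` gives the functional equation
`F(w) = (1 - w) F(qw)`. Iterating, `F(w) = ∏_(k<N) (1 - w q^k) · F(q^N w)`, and
`F(q^N w) → F(0) = 1` by dominated convergence, the series being absolutely convergent by the
ratio test.
-/

open Finset Filter Topology

section Field

variable {𝕜 : Type*} [Field 𝕜]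

noncomputable def eulerTerm (q w : 𝕜) (n : ℕ) : 𝕜 :=
  (-w) ^ n * q ^ (n * (n - 1) / 2) / ∏ k ∈ range n, (1 - q ^ (k + 1))

variable (q : 𝕜)

@[simp]
lemma eulerTerm_zero (w : 𝕜) : eulerTerm q w 0 = 1 := by
  simp [eulerTerm]

lemma eulerTerm_mul_left (c w : 𝕜) (n : ℕ) :
    eulerTerm q (c * w) n = c ^ n * eulerTerm q w n := by
  simp only [eulerTerm, neg_mul_eq_mul_neg, mul_pow]
  ring

lemma one_sub_pow_mul_eulerTerm_succ {n : ℕ} (hn : 1 - q ^ (n + 1) ≠ 0) (w : 𝕜) :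
    (1 - q ^ (n + 1)) * eulerTerm q w (n + 1) = -w * eulerTerm q (q * w) n := by
  have hexp : (n + 1) * n / 2 = n * (n - 1) / 2 + n := by
    simpa [sum_range_id] using sum_range_succ (fun i => i) n
  rw [eulerTerm_mul_left, eulerTerm, eulerTerm, Nat.add_sub_cancel, hexp, prod_range_succ,
    ← div_div, mul_div_cancel₀ _ hn]
  ring

end Field

section NormedField

variable {𝕜 : Type*} [NormedField 𝕜] {q : 𝕜}

lemma one_sub_pow_succ_ne_zero (hq : ‖q‖ < 1) (n : ℕ) : 1 - q ^ (n + 1) ≠ 0 := by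
  refine sub_ne_zero.2 fun h => ?_
  have := congrArg norm h
  rw [norm_one, norm_pow] at this
  exact (pow_lt_one₀ (norm_nonneg q) hq n.succ_ne_zero).ne' this

lemma norm_eulerTerm_succ_le (hq : ‖q‖ < 1) (w : 𝕜) (n : ℕ) :
    ‖eulerTerm q w (n + 1)‖ ≤ ‖w‖ * ‖q‖ ^ n / (1 - ‖q‖) * ‖eulerTerm q w n‖ := by
  have hrec :=
    congrArg norm (one_sub_pow_mul_eulerTerm_succ q (one_sub_pow_succ_ne_zero hq n) w)
  rw [norm_mul, norm_mul, norm_neg, eulerTerm_mul_left, norm_mul, norm_pow] at hrec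
  have hlow : 1 - ‖q‖ ≤ ‖1 - q ^ (n + 1)‖ := calc
    1 - ‖q‖ ≤ 1 - ‖q‖ ^ (n + 1) := by
      gcongr; exact pow_le_of_le_one (norm_nonneg q) hq.le n.succ_ne_zero
    _ = ‖(1 : 𝕜)‖ - ‖q ^ (n + 1)‖ := by rw [norm_one, norm_pow]
    _ ≤ ‖1 - q ^ (n + 1)‖ := norm_sub_norm_le _ _
  rw [div_mul_eq_mul_div, le_div_iff₀ (sub_pos.2 hq), mul_comm]
  calc (1 - ‖q‖) * ‖eulerTerm q w (n + 1)‖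
      ≤ ‖1 - q ^ (n + 1)‖ * ‖eulerTerm q w (n + 1)‖ :=
        mul_le_mul_of_nonneg_right hlow (norm_nonneg _)
    _ = ‖w‖ * ‖q‖ ^ n * ‖eulerTerm q w n‖ := by rw [hrec]; ring

lemma summable_norm_eulerTerm (hq : ‖q‖ < 1) (w : 𝕜) :
    Summable fun n => ‖eulerTerm q w n‖ := by
  have hratio : Tendsto (fun n => ‖w‖ * ‖q‖ ^ n / (1 - ‖q‖)) atTop (𝓝 0) := by
    simpa using ((tendsto_pow_atTop_nhds_zero_of_lt_one (norm_nonneg q) hq).const_mul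
      ‖w‖).div_const (1 - ‖q‖)
  refine summable_of_ratio_norm_eventually_le (r := 1 / 2) (by norm_num) ?_
  filter_upwards [hratio.eventually (ge_mem_nhds (by norm_num : (0 : ℝ) < 1 / 2))] with n hn
  simp only [norm_norm]
  exact (norm_eulerTerm_succ_le hq w n).trans (by gcongr)

noncomputable def eulerSeries (q w : 𝕜) : 𝕜 :=
  ∑' n, eulerTerm q w n

variable [CompleteSpace 𝕜]

lemma summable_eulerTerm (hq : ‖q‖ < 1) (w : 𝕜) : Summable (eulerTerm q w) :=
  (summable_norm_eulerTerm hq w).of_norm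

lemma eulerSeries_eq_one_sub_mul (hq : ‖q‖ < 1) (w : 𝕜) :
    eulerSeries q w = (1 - w) * eulerSeries q (q * w) := by
  have hs := summable_eulerTerm hq w
  have hs' := summable_eulerTerm hq (q * w)
  have hstep (n : ℕ) :
      eulerTerm q w (n + 1) - eulerTerm q (q * w) (n + 1) = -w * eulerTerm q (q * w) n := by
    rw [← one_sub_pow_mul_eulerTerm_succ q (one_sub_pow_succ_ne_zero hq n), eulerTerm_mul_left]
    ring
  have hdiff := (hs.sub hs').tsum_eq_zero_add
  simp only [eulerTerm_zero, sub_self, zero_add, hstep, tsum_mul_left] at hdiff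
  rw [hs.tsum_sub hs'] at hdiff
  unfold eulerSeries
  linear_combination hdiff

lemma tendsto_eulerSeries_pow_mul (hq : ‖q‖ < 1) (w : 𝕜) :
    Tendsto (fun N => eulerSeries q (q ^ N * w)) atTop (𝓝 1) := by
  have hlim (n : ℕ) :
      Tendsto (fun N => eulerTerm q (q ^ N * w) n) atTop (𝓝 (eulerTerm q 0 n)) := by
    have hcont : Continuous fun v => eulerTerm q v n := by unfold eulerTerm; fun_prop
    have : Tendsto (fun N => q ^ N * w) atTop (𝓝 0) := by
      simpa using (tendsto_pow_atTop_nhds_zero_of_norm_lt_one hq).mul_const w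
    exact (hcont.tendsto 0).comp this
  have hbound (N n : ℕ) : ‖eulerTerm q (q ^ N * w) n‖ ≤ ‖eulerTerm q w n‖ := by
    rw [eulerTerm_mul_left, norm_mul, norm_pow, norm_pow]
    exact mul_le_of_le_one_left (norm_nonneg _)
      (pow_le_one₀ (by positivity) (pow_le_one₀ (norm_nonneg _) hq.le))
  have := tendsto_tsum_of_dominated_convergence (summable_norm_eulerTerm hq w) hlim
    (Eventually.of_forall hbound)
  rwa [tsum_eq_single 0 fun n hn => by simp [eulerTerm, hn], eulerTerm_zero] at this

lemma eulerSeries_eq_prod_mul (hq : ‖q‖ < 1) (w : 𝕜) (N : ℕ) :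
    eulerSeries q w = (∏ k ∈ range N, (1 - w * q ^ k)) * eulerSeries q (q ^ N * w) := by
  induction N with
  | zero => simp
  | succ N ih =>
    rw [ih, eulerSeries_eq_one_sub_mul hq (q ^ N * w), ← mul_assoc q, ← pow_succ',
      prod_range_succ]
    ring

lemma multipliable_one_sub_mul_pow (hq : ‖q‖ < 1) (w : 𝕜) :
    Multipliable fun n => 1 - w * q ^ n := by
  simp_rw [sub_eq_add_neg]
  apply multipliable_one_add_of_summable
  simpa [norm_mul, norm_pow] using
    (summable_geometric_of_lt_one (norm_nonneg _) hq).mul_left ‖w‖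

theorem eulerSeries_eq_tprod (hq : ‖q‖ < 1) (w : 𝕜) :
    eulerSeries q w = ∏' n, (1 - w * q ^ n) := by
  have hlim := (multipliable_one_sub_mul_pow hq w).hasProd.tendsto_prod_nat.mul
    (tendsto_eulerSeries_pow_mul hq w)
  rw [mul_one] at hlim
  exact tendsto_nhds_unique (tendsto_const_nhds.congr (eulerSeries_eq_prod_mul hq w)) hlim

end NormedField

/-- Euler-type identity: for `α ∈ (0,1)` and every `λ ∈ ℂ`,
`1 + Σ_{n≥1} (−λ)^n α^{n(n−1)/2}(1−α)^n / ((1−α)⋯(1−α^n))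
  = ∏_{n≥1} (1 − λ(1−α)α^{n−1})`. -/
theorem stmt_12 (α : ℝ) (hα : α ∈ Set.Ioo (0:ℝ) 1) (z : ℂ) :
    1 + ∑' n : ℕ,
        ((-z) ^ (n + 1) * (α : ℂ) ^ ((n + 1) * n / 2) * (1 - (α : ℂ)) ^ (n + 1) /
          ∏ k ∈ Finset.range (n + 1), (1 - (α : ℂ) ^ (k + 1))) =
      ∏' n : ℕ, (1 - z * (1 - (α : ℂ)) * (α : ℂ) ^ n) := by
  have hq : ‖(α : ℂ)‖ < 1 := by
    rw [Complex.norm_real, Real.norm_of_nonneg hα.1.le]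
    exact hα.2
  rw [← eulerSeries_eq_tprod hq, eulerSeries, (summable_eulerTerm hq _).tsum_eq_zero_add,
    eulerTerm_zero]
  congr 1
  refine tsum_congr fun n => ?_
  rw [eulerTerm, Nat.add_sub_cancel, ← neg_mul, mul_pow]
  ring
end

section
/- Let φ : [0,1] → [0,1] be a strictly increasing continuous bijection with φ(x) ≥ x. Then ∫₀¹ ∫_{φ⁻²(t)}^{φ(t)} (φ(s) − φ⁻¹(t)) ds dt = 1 − 3∫₀¹ φ(t)·φ⁻¹(t) dt, where φ⁻² = φ⁻¹ ∘ φ⁻¹. -/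
/-!
Write `ψ = φ⁻¹`. For an increasing bijection `f` of `[a, b]` onto `[c, d]`, Fubini on the region
above its graph gives `∫_a^b ∫_{f t}^d h = ∫_c^d h u (f⁻¹ u - a) du`; for `h = 1` this is Young's
equality `∫_a^b f + ∫_c^d f⁻¹ = b d - a c`.

The inner integral splits as `∫_{ψ²t}^1 φ - ∫_{φt}^1 φ - φ t ψ t + ψ t ψ² t`. The first two terms
integrate to `∫ φ φ²` and `∫ φ ψ`, while `∫ ψ ψ² = ∫_0^1 ∫_{φ²t}^1 ψ = 1 - ∫ φ φ² - ∫ φ ψ` by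
Young's equality on `[φ t, 1]`. The terms `∫ φ φ²` cancel, leaving `1 - 3 ∫ φ ψ`.
-/

open Set intervalIntegral MeasureTheory

lemma StrictMonoOn.strictMonoOn_of_rightInvOn {α β : Type*} [LinearOrder α] [Preorder β]
    {f : α → β} {g : β → α} {s : Set α} {t : Set β}
    (hf : StrictMonoOn f s) (hg : MapsTo g t s) (hfg : RightInvOn g f t) : StrictMonoOn g t :=
  fun u hu v hv huv ↦ (hf.lt_iff_lt (hg hu) (hg hv)).1 (by rwa [hfg hu, hfg hv])

section AboveGraph

variable {f g h : ℝ → ℝ} {a b c d : ℝ}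

lemma exists_integrable_kernel_above_graph (hf : StrictMonoOn f (Icc a b))
    (hfm : MapsTo f (Icc a b) (Icc c d)) (hgm : MapsTo g (Icc c d) (Icc a b))
    (hfg : RightInvOn g f (Icc c d)) (hh : IntegrableOn h (Ioc c d)) :
    ∃ K : ℝ × ℝ → ℝ,
      Integrable K ((volume.restrict (Ioc a b)).prod (volume.restrict (Ioc c d))) ∧
      (∀ t ∈ Ioc a b, ∫ u in Ioc c d, K (t, u) = ∫ u in f t..d, h u) ∧
      ∀ u ∈ Ioc c d, ∫ t in Ioc a b, K (t, u) = h u * (g u - a) := by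
  -- a monotone extension `F` of `f` to all of `ℝ` makes the region `{F t < u}` measurable
  obtain ⟨F, hF, hfF⟩ := hf.monotoneOn.exists_monotone_extension
    ⟨c, forall_mem_image.2 fun t ht ↦ (hfm ht).1⟩ ⟨d, forall_mem_image.2 fun t ht ↦ (hfm ht).2⟩
  refine ⟨{p | F p.1 < p.2}.indicator fun p ↦ h p.2,
    (hh.comp_snd _).indicator (measurableSet_lt (f := fun p : ℝ × ℝ ↦ F p.1) (g := Prod.snd)
      (hF.measurable.comp measurable_fst) measurable_snd),
    fun t ht ↦ ?_, fun u hu ↦ ?_⟩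
  · have ht' : t ∈ Icc a b := Ioc_subset_Icc_self ht
    have hft := hfm ht'
    change ∫ u in Ioc c d, (Ioi (F t)).indicator h u = _
    rw [← hfF ht', setIntegral_indicator measurableSet_Ioi, Ioc_inter_Ioi,
      sup_eq_right.2 hft.1, integral_of_le hft.2]
  · have hgu := hgm (Ioc_subset_Icc_self hu)
    calc ∫ t in Ioc a b, {p : ℝ × ℝ | F p.1 < p.2}.indicator (fun p ↦ h p.2) (t, u)
        = ∫ t in Ioc a b, (Iio (g u)).indicator (fun _ ↦ h u) t := by
          refine setIntegral_congr_fun measurableSet_Ioc fun t ht ↦ ?_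
          have ht' : t ∈ Icc a b := Ioc_subset_Icc_self ht
          have hlt : F t < u ↔ t < g u := by
            rw [← hfF ht', ← hf.lt_iff_lt ht' hgu, hfg (Ioc_subset_Icc_self hu)]
          simp only [indicator_apply, mem_ofPred_eq, mem_Iio, hlt]
      _ = h u * (g u - a) := by
          have hIoo : Ioc a b ∩ Iio (g u) = Ioo a (g u) := Set.ext fun t ↦
            ⟨fun ⟨⟨hat, _⟩, htg⟩ ↦ ⟨hat, htg⟩, fun ⟨hat, htg⟩ ↦ ⟨⟨hat, htg.le.trans hgu.2⟩, htg⟩⟩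
          rw [setIntegral_indicator measurableSet_Iio, hIoo, setIntegral_const,
            Real.volume_real_Ioo_of_le hgu.1, smul_eq_mul, mul_comm]

variable (hab : a ≤ b) (hf : StrictMonoOn f (Icc a b))
    (hfm : MapsTo f (Icc a b) (Icc c d)) (hgm : MapsTo g (Icc c d) (Icc a b))
    (hfg : RightInvOn g f (Icc c d))
include hab hf hfm hgm hfg

lemma intervalIntegrable_integral_above_graph (hh : IntervalIntegrable h volume c d) :
    IntervalIntegrable (fun t ↦ ∫ u in f t..d, h u) volume a b := by
  obtain ⟨K, hK, hleft, -⟩ := exists_integrable_kernel_above_graph hf hfm hgm hfg hh.1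
  rw [intervalIntegrable_iff_integrableOn_Ioc_of_le hab]
  exact IntegrableOn.congr_fun hK.integral_prod_left hleft measurableSet_Ioc

lemma integral_integral_above_graph (hh : IntervalIntegrable h volume c d) :
    ∫ t in a..b, ∫ u in f t..d, h u = ∫ u in c..d, h u * (g u - a) := by
  obtain ⟨K, hK, hleft, hright⟩ := exists_integrable_kernel_above_graph hf hfm hgm hfg hh.1
  have hcd : c ≤ d := (hfm (left_mem_Icc.2 hab)).1.trans (hfm (left_mem_Icc.2 hab)).2
  calc ∫ t in a..b, ∫ u in f t..d, h u
      = ∫ t in Ioc a b, ∫ u in Ioc c d, K (t, u) := by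
        rw [integral_of_le hab]
        exact setIntegral_congr_fun measurableSet_Ioc fun t ht ↦ (hleft t ht).symm
    _ = ∫ u in Ioc c d, ∫ t in Ioc a b, K (t, u) := integral_integral_swap hK
    _ = ∫ u in c..d, h u * (g u - a) := by
        rw [integral_of_le hcd]
        exact setIntegral_congr_fun measurableSet_Ioc hright

/-- Young's equality. -/
lemma integral_add_integral_of_rightInvOn :
    (∫ t in a..b, f t) + ∫ u in c..d, g u = b * d - a * c := by
  have hcd : c ≤ d := (hfm (left_mem_Icc.2 hab)).1.trans (hfm (left_mem_Icc.2 hab)).2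
  have hfi : IntervalIntegrable f volume a b :=
    (hf.monotoneOn.mono (uIcc_of_le hab).subset).intervalIntegrable
  have hgi : IntervalIntegrable g volume c d :=
    ((hf.strictMonoOn_of_rightInvOn hgm hfg).monotoneOn.mono
      (uIcc_of_le hcd).subset).intervalIntegrable
  have key := integral_integral_above_graph hab hf hfm hgm hfg (h := fun _ ↦ (1 : ℝ))
    intervalIntegrable_const
  simp only [intervalIntegral.integral_const, smul_eq_mul, mul_one, one_mul] at key
  rw [integral_sub intervalIntegrable_const hfi, integral_sub hgi intervalIntegrable_const,
    intervalIntegral.integral_const, intervalIntegral.integral_const, smul_eq_mul,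
    smul_eq_mul] at key
  linarith

end AboveGraph

lemma intervalIntegrable_mul_of_monotoneOn {u v : ℝ → ℝ} {a b : ℝ} (hab : a ≤ b)
    (hu : MonotoneOn u (Icc a b)) (hv : MonotoneOn v (Icc a b)) (hu₀ : ∀ x ∈ Icc a b, 0 ≤ u x)
    (hv₀ : ∀ x ∈ Icc a b, 0 ≤ v x) : IntervalIntegrable (fun t ↦ u t * v t) volume a b :=
  ((hu.mul hv hu₀ hv₀).mono (uIcc_of_le hab).subset).intervalIntegrable

section UnitInterval

variable {φ ψ : ℝ → ℝ} (hφ : StrictMonoOn φ (Icc 0 1)) (hφm : MapsTo φ (Icc 0 1) (Icc 0 1))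
    (hψm : MapsTo ψ (Icc 0 1) (Icc 0 1)) (hinv : InvOn ψ φ (Icc 0 1) (Icc 0 1)) (hφ1 : φ 1 = 1)
include hφ hφm hψm hinv hφ1

lemma integral_add_integral_inverse_Icc_one {x : ℝ} (hx : x ∈ Icc (0 : ℝ) 1) :
    (∫ t in x..1, φ t) + ∫ u in φ x..1, ψ u = 1 - x * φ x := by
  have hψ : StrictMonoOn ψ (Icc 0 1) := hφ.strictMonoOn_of_rightInvOn hψm hinv.2
  have hψ1 : ψ 1 = 1 := by simpa [hφ1] using hinv.1 (right_mem_Icc.2 zero_le_one)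
  have hsub : Icc x 1 ⊆ Icc 0 1 := Icc_subset_Icc hx.1 le_rfl
  have hsub' : Icc (φ x) 1 ⊆ Icc 0 1 := Icc_subset_Icc (hφm hx).1 le_rfl
  have key := integral_add_integral_of_rightInvOn hx.2 (hφ.mono hsub)
    (by simpa [hφ1] using (hφ.monotoneOn.mono hsub).mapsTo_Icc)
    (by simpa [hinv.1 hx, hψ1] using (hψ.monotoneOn.mono hsub').mapsTo_Icc) (hinv.2.mono hsub')
  rwa [one_mul] at key

lemma integral_mul_inverse_comp_inverse :
    ∫ t in (0 : ℝ)..1, ψ t * ψ (ψ t) =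
      1 - (∫ t in (0 : ℝ)..1, φ t * φ (φ t)) - ∫ t in (0 : ℝ)..1, φ t * ψ t := by
  have hψ : StrictMonoOn ψ (Icc 0 1) := hφ.strictMonoOn_of_rightInvOn hψm hinv.2
  have hψi : IntervalIntegrable ψ volume 0 1 :=
    (hψ.monotoneOn.mono (uIcc_of_le zero_le_one).subset).intervalIntegrable
  have hφi : IntervalIntegrable φ volume 0 1 :=
    (hφ.monotoneOn.mono (uIcc_of_le zero_le_one).subset).intervalIntegrable
  have tail := integral_integral_above_graph zero_le_one hφ hφm hψm hinv.2 hφi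
  have tail₂ := integral_integral_above_graph zero_le_one (hφ.comp hφ hφm) (hφm.comp hφm)
    (hψm.comp hψm) (hinv.2.comp hinv.2 hψm) hψi
  simp only [Function.comp_apply, sub_zero] at tail tail₂
  have hφφi : IntervalIntegrable (fun t ↦ φ t * φ (φ t)) volume 0 1 :=
    intervalIntegrable_mul_of_monotoneOn zero_le_one hφ.monotoneOn
      (hφ.monotoneOn.comp hφ.monotoneOn hφm) (fun x hx ↦ (hφm hx).1) (fun x hx ↦ (hφm (hφm hx)).1)
  calc ∫ t in (0 : ℝ)..1, ψ t * ψ (ψ t)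
      = ∫ t in (0 : ℝ)..1, ∫ u in φ (φ t)..1, ψ u := tail₂.symm
    _ = ∫ t in (0 : ℝ)..1, (1 - φ t * φ (φ t) - ∫ u in φ t..1, φ u) := by
        refine integral_congr fun t ht ↦ ?_
        rw [uIcc_of_le zero_le_one] at ht
        have := integral_add_integral_inverse_Icc_one hφ hφm hψm hinv hφ1 (hφm ht)
        linarith
    _ = _ := by
        rw [integral_sub (intervalIntegrable_const.sub hφφi)
          (intervalIntegrable_integral_above_graph zero_le_one hφ hφm hψm hinv.2 hφi),
          integral_sub intervalIntegrable_const hφφi, tail]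
        simp only [intervalIntegral.integral_const, sub_zero, smul_eq_mul, mul_one]

omit hinv hφ1 in
lemma integral_sub_inverse_eq_tails {t : ℝ} (ht : t ∈ Icc (0 : ℝ) 1) :
    ∫ s in ψ (ψ t)..φ t, (φ s - ψ t) =
      (∫ u in ψ (ψ t)..1, φ u) - (∫ u in φ t..1, φ u) - φ t * ψ t + ψ t * ψ (ψ t) := by
  have hφi : ∀ x ∈ Icc (0 : ℝ) 1, ∀ y ∈ Icc (0 : ℝ) 1, IntervalIntegrable φ volume x y :=
    fun x hx y hy ↦ (hφ.monotoneOn.mono (uIcc_subset_Icc hx hy)).intervalIntegrable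
  have hsplit := integral_add_adjacent_intervals (hφi _ (hψm (hψm ht)) _ (hφm ht))
    (hφi _ (hφm ht) 1 (right_mem_Icc.2 zero_le_one))
  rw [integral_sub (hφi _ (hψm (hψm ht)) _ (hφm ht)) intervalIntegrable_const,
    intervalIntegral.integral_const, smul_eq_mul]
  linear_combination hsplit

lemma integral_integral_sub_inverse :
    (∫ t in (0 : ℝ)..1, ∫ s in ψ (ψ t)..φ t, (φ s - ψ t)) =
      1 - 3 * ∫ t in (0 : ℝ)..1, φ t * ψ t := by
  have hψ : StrictMonoOn ψ (Icc 0 1) := hφ.strictMonoOn_of_rightInvOn hψm hinv.2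
  have hφi : IntervalIntegrable φ volume 0 1 :=
    (hφ.monotoneOn.mono (uIcc_of_le zero_le_one).subset).intervalIntegrable
  have hψψm : MapsTo (ψ ∘ ψ) (Icc 0 1) (Icc 0 1) := hψm.comp hψm
  have hinv₂ : RightInvOn (φ ∘ φ) (ψ ∘ ψ) (Icc 0 1) := hinv.symm.2.comp hinv.symm.2 hφm
  have tail := integral_integral_above_graph zero_le_one hφ hφm hψm hinv.2 hφi
  have tail₂ := integral_integral_above_graph zero_le_one (hψ.comp hψ hψm) hψψm (hφm.comp hφm)
    hinv₂ hφi
  simp only [Function.comp_apply, sub_zero] at tail tail₂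
  have hA₁ : IntervalIntegrable (fun t ↦ ∫ u in ψ (ψ t)..1, φ u) volume 0 1 :=
    intervalIntegrable_integral_above_graph zero_le_one (hψ.comp hψ hψm) hψψm
      (hφm.comp hφm) hinv₂ hφi
  have hA₂ := intervalIntegrable_integral_above_graph zero_le_one hφ hφm hψm hinv.2 hφi
  have hφψ := intervalIntegrable_mul_of_monotoneOn zero_le_one hφ.monotoneOn hψ.monotoneOn
    (fun x hx ↦ (hφm hx).1) (fun x hx ↦ (hψm hx).1)
  have hψψ : IntervalIntegrable (fun t ↦ ψ t * ψ (ψ t)) volume 0 1 :=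
    intervalIntegrable_mul_of_monotoneOn zero_le_one hψ.monotoneOn
      (hψ.monotoneOn.comp hψ.monotoneOn hψm) (fun x hx ↦ (hψm hx).1) (fun x hx ↦ (hψψm hx).1)
  have hinner : EqOn (fun t ↦ ∫ s in ψ (ψ t)..φ t, (φ s - ψ t))
      (fun t ↦ (∫ u in ψ (ψ t)..1, φ u) - (∫ u in φ t..1, φ u) - φ t * ψ t + ψ t * ψ (ψ t))
      (uIcc 0 1) := fun t ht ↦
    integral_sub_inverse_eq_tails hφ hφm hψm (by rwa [uIcc_of_le zero_le_one] at ht)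
  rw [integral_congr hinner, intervalIntegral.integral_add ((hA₁.sub hA₂).sub hφψ) hψψ,
    intervalIntegral.integral_sub (hA₁.sub hA₂) hφψ, intervalIntegral.integral_sub hA₁ hA₂,
    tail, tail₂, integral_mul_inverse_comp_inverse hφ hφm hψm hinv hφ1]
  ring

end UnitInterval

theorem stmt_16_general (φ ψ : ℝ → ℝ)
    (hmono : StrictMonoOn φ (Icc 0 1))
    (hcont : ContinuousOn φ (Icc 0 1))
    (h0 : φ 0 = 0) (h1 : φ 1 = 1)
    (hmaps : MapsTo φ (Icc 0 1) (Icc 0 1))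
    (hinv : ∀ x ∈ Icc (0:ℝ) 1, ψ (φ x) = x ∧ φ (ψ x) = x) :
    (∫ t in (0:ℝ)..1, ∫ s in (ψ (ψ t))..(φ t), (φ s - ψ t)) =
      1 - 3 * ∫ t in (0:ℝ)..1, φ t * ψ t := by
  have hsurj : SurjOn φ (Icc 0 1) (Icc 0 1) := by
    simpa only [SurjOn, h0, h1] using intermediate_value_Icc zero_le_one hcont
  have hinvOn : InvOn ψ φ (Icc 0 1) (Icc 0 1) :=
    ⟨fun x hx ↦ (hinv x hx).1, fun x hx ↦ (hinv x hx).2⟩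
  exact integral_integral_sub_inverse hmono hmaps (hinvOn.1.mapsTo hsurj) hinvOn h1

theorem stmt_16 (φ ψ : ℝ → ℝ)
    (hmono : StrictMonoOn φ (Icc 0 1))
    (hcont : ContinuousOn φ (Icc 0 1))
    (h0 : φ 0 = 0) (h1 : φ 1 = 1)
    (hmaps : MapsTo φ (Icc 0 1) (Icc 0 1))
    (hge : ∀ x ∈ Icc (0:ℝ) 1, x ≤ φ x)
    (hinv : ∀ x ∈ Icc (0:ℝ) 1, ψ (φ x) = x ∧ φ (ψ x) = x) :
    (∫ t in (0:ℝ)..1, ∫ s in (ψ (ψ t))..(φ t), (φ s - ψ t)) =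
      1 - 3 * ∫ t in (0:ℝ)..1, φ t * ψ t :=
  stmt_16_general φ ψ hmono hcont h0 h1 hmaps hinv
end

section
/- Let φ : [0,1] → [0,1] be a strictly increasing continuous function with φ(x) ≥ x for all x ∈ [0,1], and let V_φ be the operator on L²[0,1] given by (V_φ f)(x) = ∫₀^{φ(x)} f(t) dt. Then for every a ∈ (0,1), applying V_φ to the indicator function f_a = 1_{[a,1]} yields (V_φ f_a)(x) ≥ (φ(a) − a)·f_a(x) for all x ∈ [0,1]; consequently ‖V_φⁿ f_a‖ ≥ (φ(a)−a)ⁿ ‖f_a‖ for all n, so the spectral radius of V_φ is at least sup_{x∈[0,1]} (φ(x) − x). -/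
/-!
`V_φ` is positive (as a linear map of `L²`, monotone), and
`V_φ f_a ≥ (φ(a) - a) f_a` pointwise because `∫₀^{φ(x)} f_a = φ(x) - a ≥ φ(a) - a` for `x ≥ a`;
positivity lets this inequality be iterated, which gives the norm bound.

The spectral radius is taken over `ℝ`, where Gelfand's formula is of no help. Instead, for a
positive operator `V` on a Banach lattice the resolvent `(t - V)⁻¹` is positive as long as all of
`[t, ∞)` lies outside the spectrum: this holds for `t > ‖V‖` by the Neumann series, and it
propagates downwards by continuous induction, since `(t - s - V)⁻¹ = ∑ sⁿ (t - V)⁻ⁿ⁻¹` for small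
`s ≥ 0`. If `c g ≤ V g` with `0 ≤ g ≠ 0` and some `t < c` were beyond the spectral radius, then
`G = (t - V)⁻¹ g ≥ 0` would satisfy `t G = g + V G`, forcing `t G ≥ (c / t)ⁿ g` for every `n`.
-/

open Set MeasureTheory intervalIntegral

theorem norm_le_norm_of_nonneg_of_le {E : Type*} [NormedAddCommGroup E] [Lattice E]
    [HasSolidNorm E] [IsOrderedAddMonoid E] {x y : E} (hx : 0 ≤ x) (hxy : x ≤ y) :
    ‖x‖ ≤ ‖y‖ :=
  norm_le_norm_of_abs_le_abs (by rwa [abs_of_nonneg hx, abs_of_nonneg (hx.trans hxy)])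

namespace ContinuousLinearMap

variable {E : Type*} [NormedAddCommGroup E] [Lattice E] [NormedSpace ℝ E]

theorem monotone_mul {S T : E →L[ℝ] E} (hS : Monotone S) (hT : Monotone T) :
    Monotone ⇑(S * T) := by
  rw [FunLike.coe_mul_eq_comp]
  exact hS.comp hT

theorem monotone_pow {T : E →L[ℝ] E} (hT : Monotone T) (n : ℕ) : Monotone ⇑(T ^ n) := by
  rw [FunLike.coe_pow_eq_iterate]
  exact hT.iterate n

theorem monotone_algebraMap [PosSMulMono ℝ E] {c : ℝ} (hc : 0 ≤ c) :
    Monotone (algebraMap ℝ (E →L[ℝ] E) c) := fun _ _ h => by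
  simpa [Algebra.algebraMap_eq_smul_one] using smul_le_smul_of_nonneg_left h hc

theorem isClosed_setOf_monotone [OrderClosedTopology E] :
    IsClosed {T : E →L[ℝ] E | Monotone T} := by
  simp only [Monotone, ofPred_forall]
  exact isClosed_iInter fun f => isClosed_iInter fun g => isClosed_iInter fun _ =>
    isClosed_le (apply ℝ E f).continuous (apply ℝ E g).continuous

section Iterate

variable [PosSMulMono ℝ E] {T : E →L[ℝ] E}

theorem smul_pow_le_pow_apply (hT : Monotone T) {c : ℝ} (hc : 0 ≤ c) {g : E}
    (hg : c • g ≤ T g) (n : ℕ) : c ^ n • g ≤ (T ^ n) g := by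
  induction n with
  | zero => simp
  | succ n ih =>
    calc c ^ (n + 1) • g = c ^ n • c • g := by rw [pow_succ, mul_smul]
      _ ≤ c ^ n • T g := smul_le_smul_of_nonneg_left hg (pow_nonneg hc n)
      _ = T (c ^ n • g) := (map_smul T _ g).symm
      _ ≤ T ((T ^ n) g) := hT ih
      _ = (T ^ (n + 1)) g := by rw [pow_succ']; rfl

variable [HasSolidNorm E] [IsOrderedAddMonoid E]

theorem pow_mul_norm_le_norm_pow_apply (hT : Monotone T) {c : ℝ} (hc : 0 ≤ c) {g : E}
    (hg0 : 0 ≤ g) (hg : c • g ≤ T g) (n : ℕ) : c ^ n * ‖g‖ ≤ ‖(T ^ n) g‖ := by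
  have hcn : 0 ≤ c ^ n := pow_nonneg hc n
  have h := norm_le_norm_of_nonneg_of_le (smul_nonneg hcn hg0) (smul_pow_le_pow_apply hT hc hg n)
  rwa [norm_smul, Real.norm_of_nonneg hcn] at h

theorem eq_zero_of_smul_le_of_smul_eq_add (hT : Monotone T) {g G : E} (hg : 0 ≤ g)
    (hG : 0 ≤ G) {c t : ℝ} (ht : 0 < t) (htc : t < c) (hcg : c • g ≤ T g)
    (hGg : t • G = g + T G) : g = 0 := by
  have hTG : 0 ≤ T G := by simpa using hT hG
  have hq : 0 ≤ c / t := div_nonneg (ht.le.trans htc.le) ht.le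
  have hpow : ∀ n : ℕ, (c / t) ^ n • g ≤ t • G := by
    intro n
    induction n with
    | zero => simpa [hGg] using hTG
    | succ n ih =>
      have hcoef : 0 ≤ t⁻¹ * (c / t) ^ n := by positivity
      calc (c / t) ^ (n + 1) • g = (t⁻¹ * (c / t) ^ n) • c • g := by
            rw [smul_smul]; congr 1; ring
        _ ≤ (t⁻¹ * (c / t) ^ n) • T g := smul_le_smul_of_nonneg_left hcg hcoef
        _ = T (t⁻¹ • (c / t) ^ n • g) := by rw [map_smul, map_smul, smul_smul]
        _ ≤ T (t⁻¹ • t • G) := hT (smul_le_smul_of_nonneg_left ih (inv_nonneg.mpr ht.le))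
        _ = T G := by rw [inv_smul_smul₀ ht.ne']
        _ ≤ t • G := by rw [hGg]; exact le_add_of_nonneg_left hg
  have hnorm : ∀ n : ℕ, (c / t) ^ n * ‖g‖ ≤ t * ‖G‖ := fun n => by
    have h := norm_le_norm_of_nonneg_of_le (smul_nonneg (pow_nonneg hq n) hg) (hpow n)
    rwa [norm_smul, norm_smul, Real.norm_of_nonneg (pow_nonneg hq n),
      Real.norm_of_nonneg ht.le] at h
  by_contra hg0
  have hgpos : 0 < ‖g‖ := norm_pos_iff.mpr hg0
  obtain ⟨n, hn⟩ := pow_unbounded_of_one_lt (t * ‖G‖ / ‖g‖) ((one_lt_div ht).mpr htc)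
  rw [div_lt_iff₀ hgpos] at hn
  linarith [hnorm n]

end Iterate

variable [IsOrderedAddMonoid E] [CompleteSpace E] [OrderClosedTopology E]

theorem monotone_inverse_one_sub {T : E →L[ℝ] E} (hT : Monotone T) (h : ‖T‖ < 1) :
    Monotone ⇑(Ring.inverse (1 - T)) := by
  rw [← geom_series_eq_inverse T h, monotone_iff_map_nonneg]
  intro f hf
  rw [← apply_apply (𝕜 := ℝ), ContinuousLinearMap.map_tsum _ (summable_geometric_of_norm_lt_one h)]
  exact tsum_nonneg fun n => by simpa using monotone_pow hT n hf

theorem monotone_inverse_sub {A W : E →L[ℝ] E} (hA : IsUnit A)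
    (hAinv : Monotone ⇑(Ring.inverse A)) (hW : Monotone W) (h : ‖Ring.inverse A * W‖ < 1) :
    Monotone ⇑(Ring.inverse (A - W)) := by
  obtain ⟨u, rfl⟩ := hA
  rw [Ring.inverse_unit] at hAinv h
  have hfactor : (u : E →L[ℝ] E) - W = u * (1 - ↑u⁻¹ * W) := by
    rw [mul_sub, mul_one, ← mul_assoc, Units.mul_inv, one_mul]
  rw [hfactor, ← Units.val_oneSub _ h, ← Units.val_mul, Ring.inverse_unit, mul_inv_rev,
    Units.val_mul, ← NormedRing.inverse_one_sub _ h]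
  exact monotone_mul (monotone_inverse_one_sub (monotone_mul hAinv hW) h) hAinv

open spectrum

variable [PosSMulMono ℝ E] {V : E →L[ℝ] E}

theorem monotone_resolvent_of_norm_lt (hV : Monotone V) {t : ℝ} (ht : ‖V‖ < t) :
    Monotone ⇑(resolvent V t) := by
  have ht0 : 0 < t := (norm_nonneg V).trans_lt ht
  have hunit : IsUnit (algebraMap ℝ (E →L[ℝ] E) t) := (isUnit_iff_ne_zero.mpr ht0.ne').map _
  have hinv : Ring.inverse (algebraMap ℝ (E →L[ℝ] E) t) = algebraMap ℝ _ t⁻¹ := by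
    simpa using (Ring.inverse_mul_eq_iff_eq_mul _ 1 _ hunit).mpr
      (by rw [← map_mul, mul_inv_cancel₀ ht0.ne', map_one])
  refine monotone_inverse_sub hunit (hinv ▸ monotone_algebraMap (inv_nonneg.mpr ht0.le)) hV ?_
  rw [hinv, Algebra.algebraMap_eq_smul_one, smul_one_mul, norm_smul,
    Real.norm_of_nonneg (inv_nonneg.mpr ht0.le), inv_mul_lt_iff₀ ht0, mul_one]
  exact ht

theorem monotone_resolvent_sub {t s : ℝ} (ht : t ∈ resolventSet ℝ V)
    (hR : Monotone ⇑(resolvent V t)) (hs : 0 ≤ s) (hsR : s * ‖resolvent V t‖ < 1) :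
    Monotone ⇑(resolvent V (t - s)) := by
  have h := monotone_inverse_sub ht hR (monotone_algebraMap hs) (by
    rwa [← resolvent, Algebra.algebraMap_eq_smul_one, mul_smul_one, norm_smul,
      Real.norm_of_nonneg hs])
  rwa [sub_right_comm, ← map_sub] at h

theorem monotone_resolvent_of_Ici_subset (hV : Monotone V) {t : ℝ}
    (ht : Ici t ⊆ resolventSet ℝ V) : Monotone ⇑(resolvent V t) := by
  set b := max t (‖V‖ + 1)
  have hcont : ContinuousOn (resolvent V) (Icc t b) := fun x hx =>
    (hasDerivAt_resolvent_const_left (ht hx.1)).continuousAt.continuousWithinAt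
  have hclosed : IsClosed ({x | Monotone ⇑(resolvent V x)} ∩ Icc t b) := by
    rw [inter_comm]
    exact hcont.preimage_isClosed_of_isClosed isClosed_Icc isClosed_setOf_monotone
  refine hclosed.mem_of_ge_of_forall_exists_lt
    (monotone_resolvent_of_norm_lt hV (by linarith [le_max_right t (‖V‖ + 1)]))
    (le_max_left _ _) ?_
  rintro x ⟨hxR, hxt, -⟩
  set s := min (x - t) (‖resolvent V x‖ + 1)⁻¹
  have hs : 0 < s := lt_min (sub_pos.mpr hxt) (by positivity)
  have hsR : s * ‖resolvent V x‖ < 1 := by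
    calc s * ‖resolvent V x‖ ≤ (‖resolvent V x‖ + 1)⁻¹ * ‖resolvent V x‖ := by
          gcongr; exact min_le_right _ _
      _ < 1 := by rw [inv_mul_lt_iff₀ (by positivity)]; linarith
  exact ⟨x - s, monotone_resolvent_sub (ht hxt.le) hxR hs.le hsR,
    by linarith [min_le_left (x - t) (‖resolvent V x‖ + 1)⁻¹], by linarith⟩

variable [HasSolidNorm E]

theorem ofReal_le_spectralRadius_of_smul_le (hV : Monotone V) {g : E} (hg0 : 0 ≤ g)
    (hg : g ≠ 0) {c : ℝ} (hcg : c • g ≤ V g) : ENNReal.ofReal c ≤ spectralRadius ℝ V := by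
  by_contra! hc
  obtain ⟨t, ht0, hρt, htc⟩ := ENNReal.lt_iff_exists_real_btwn.mp hc
  have htpos : 0 < t := ENNReal.ofReal_pos.mp (zero_le.trans_lt hρt)
  have hsub : Ici t ⊆ resolventSet ℝ V := fun s hs => mem_resolventSet_of_spectralRadius_lt <| by
    calc spectralRadius ℝ V < ENNReal.ofReal t := hρt
      _ ≤ ENNReal.ofReal s := ENNReal.ofReal_le_ofReal hs
      _ = ‖s‖₊ := by rw [← Real.enorm_eq_ofReal (ht0.trans hs)]; rfl
  have hunit : IsUnit (algebraMap ℝ (E →L[ℝ] E) t - V) := hsub (le_refl t)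
  set G := resolvent V t g
  have hGg : t • G = g + V G := by
    have h : ((algebraMap ℝ (E →L[ℝ] E) t - V) * resolvent V t) g = g := by
      rw [resolvent, Ring.mul_inverse_cancel _ hunit, one_apply_eq_self]
    rwa [mul_apply_eq_comp, sub_apply, Algebra.algebraMap_eq_smul_one, smul_apply,
      one_apply_eq_self, sub_eq_iff_eq_add] at h
  exact hg (eq_zero_of_smul_le_of_smul_eq_add hV hg0
    (by simpa using monotone_resolvent_of_Ici_subset hV hsub hg0) htpos
    ((ENNReal.ofReal_lt_ofReal_iff_of_nonneg ht0).mp htc) hcg hGg)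

end ContinuousLinearMap

theorem integral_indicator_Ici_one {b c : ℝ} (hb : 0 ≤ b) (hbc : b ≤ c) :
    ∫ t in (0:ℝ)..c, (Ici b).indicator (fun _ => (1:ℝ)) t = c - b := by
  have hset : (Ioc 0 c ∩ Ici b : Set ℝ) =ᵐ[volume] (Ioc 0 c ∩ Ioi b : Set ℝ) :=
    (ae_eq_refl _).inter Ioi_ae_eq_Ici.symm
  rw [integral_of_le (hb.trans hbc), setIntegral_indicator measurableSet_Ici,
    setIntegral_congr_set hset, Ioc_inter_Ioi, max_eq_right hb, setIntegral_const,
    Real.volume_real_Ioc_of_le hbc, smul_eq_mul, mul_one]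

namespace MeasureTheory.Lp

theorem nonneg_of_ae_eq_indicator_one {α : Type*} [MeasurableSpace α] {μ : Measure α}
    {p : ENNReal} {s : Set α} {g : Lp ℝ p μ} (hg : g =ᵐ[μ] s.indicator fun _ => (1:ℝ)) :
    0 ≤ g := by
  rw [← Lp.coeFn_nonneg]
  filter_upwards [hg] with x hx
  rw [hx]
  exact indicator_nonneg (fun _ _ => zero_le_one) x

instance {α : Type*} [MeasurableSpace α] {μ : Measure α} {p : ENNReal} :
    PosSMulMono ℝ (Lp ℝ p μ) :=
  PosSMulMono.of_smul_nonneg fun c hc f hf => by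
    rw [← Lp.coeFn_nonneg] at hf ⊢
    filter_upwards [Lp.coeFn_smul c f, hf] with x hcf hfx
    rw [hcf]
    exact mul_nonneg hc hfx

end MeasureTheory.Lp

section VolterraComposition

local notation "μ₀" => volume.restrict (Icc (0:ℝ) 1)

variable {φ : ℝ → ℝ}

theorem mul_indicator_le_integral_indicator (hmono : MonotoneOn φ (Icc 0 1))
    (hge : ∀ x ∈ Icc (0:ℝ) 1, x ≤ φ x) {b x : ℝ} (hb : b ∈ Icc (0:ℝ) 1)
    (hx : x ∈ Icc (0:ℝ) 1) :
    (φ b - b) * (Ici b).indicator (fun _ => (1:ℝ)) x ≤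
      ∫ t in (0:ℝ)..(φ x), (Ici b).indicator (fun _ => (1:ℝ)) t := by
  by_cases hbx : b ≤ x
  · have hφ : φ b ≤ φ x := hmono hb hx hbx
    rw [indicator_of_mem (mem_Ici.mpr hbx), mul_one,
      integral_indicator_Ici_one hb.1 ((hge b hb).trans hφ)]
    linarith
  · rw [indicator_of_notMem (by simpa using hbx), mul_zero]
    exact integral_nonneg (hx.1.trans (hge x hx)) fun t _ =>
      indicator_nonneg (fun _ _ => zero_le_one) t

variable {V : Lp ℝ 2 μ₀ →L[ℝ] Lp ℝ 2 μ₀}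

theorem monotone_of_apply_ae_eq_integral (hmaps : MapsTo φ (Icc 0 1) (Icc 0 1))
    (hV : ∀ f : Lp ℝ 2 μ₀, ∀ᵐ x ∂μ₀, V f x = ∫ t in (0:ℝ)..(φ x), f t) : Monotone V := by
  refine (monotone_iff_map_nonneg V).mpr fun f hf => ?_
  rw [← Lp.coeFn_nonneg] at hf ⊢
  filter_upwards [hV f, ae_restrict_mem measurableSet_Icc] with x hVx hx
  rw [hVx]
  exact integral_nonneg_of_ae_restrict (hmaps hx).1 <|
    ae_restrict_of_ae_restrict_of_subset (Icc_subset_Icc le_rfl (hmaps hx).2) hf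

theorem smul_le_apply_of_ae_eq_indicator (hmono : MonotoneOn φ (Icc 0 1))
    (hge : ∀ x ∈ Icc (0:ℝ) 1, x ≤ φ x) (hmaps : MapsTo φ (Icc 0 1) (Icc 0 1))
    (hV : ∀ f : Lp ℝ 2 μ₀, ∀ᵐ x ∂μ₀, V f x = ∫ t in (0:ℝ)..(φ x), f t)
    {b : ℝ} (hb : b ∈ Icc (0:ℝ) 1) {g : Lp ℝ 2 μ₀}
    (hg : g =ᵐ[μ₀] (Ici b).indicator fun _ => (1:ℝ)) : (φ b - b) • g ≤ V g := by
  have hg' : ∀ᵐ t, t ∈ Icc (0:ℝ) 1 → g t = (Ici b).indicator (fun _ => (1:ℝ)) t :=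
    (ae_restrict_iff' measurableSet_Icc).mp hg
  rw [← Lp.coeFn_le]
  filter_upwards [hV g, hg, Lp.coeFn_smul (φ b - b) g, ae_restrict_mem measurableSet_Icc]
    with x hVx hgx hsx hx
  have hφx := hmaps hx
  have hcongr : ∫ t in (0:ℝ)..(φ x), g t =
      ∫ t in (0:ℝ)..(φ x), (Ici b).indicator (fun _ => (1:ℝ)) t := by
    refine integral_congr_ae ?_
    filter_upwards [hg'] with t ht htI
    rw [uIoc_of_le hφx.1] at htI
    exact ht ⟨htI.1.le, htI.2.trans hφx.2⟩
  rw [hsx, hVx, hcongr, Pi.smul_apply, smul_eq_mul, hgx]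
  exact mul_indicator_le_integral_indicator hmono hge hb hx

theorem ofReal_sub_le_spectralRadius (hmono : MonotoneOn φ (Icc 0 1))
    (hge : ∀ x ∈ Icc (0:ℝ) 1, x ≤ φ x) (hmaps : MapsTo φ (Icc 0 1) (Icc 0 1))
    (hV : ∀ f : Lp ℝ 2 μ₀, ∀ᵐ x ∂μ₀, V f x = ∫ t in (0:ℝ)..(φ x), f t)
    {b : ℝ} (hb : b ∈ Icc (0:ℝ) 1) : ENNReal.ofReal (φ b - b) ≤ spectralRadius ℝ V := by
  rcases le_or_gt (φ b - b) 0 with hφb | hφb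
  · simp [ENNReal.ofReal_of_nonpos hφb]
  have hb1 : b < 1 := by linarith [(hmaps hb).2]
  set g := indicatorConstLp 2 measurableSet_Ici (measure_ne_top μ₀ (Ici b)) (1:ℝ)
  have hμb : (μ₀).real (Ici b) = 1 - b := by
    rw [measureReal_restrict_apply measurableSet_Ici,
      ← Ici_inter_Iic, ← inter_assoc, Ici_inter_Ici, max_eq_left hb.1, Ici_inter_Iic,
      Real.volume_real_Icc_of_le hb1.le]
  have hg : g ≠ 0 := by
    rw [← norm_pos_iff, norm_indicatorConstLp two_ne_zero ENNReal.ofNat_ne_top, hμb, norm_one,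
      one_mul]
    exact Real.rpow_pos_of_pos (sub_pos.mpr hb1) _
  exact ContinuousLinearMap.ofReal_le_spectralRadius_of_smul_le
    (monotone_of_apply_ae_eq_integral hmaps hV)
    (Lp.nonneg_of_ae_eq_indicator_one indicatorConstLp_coeFn) hg
    (smul_le_apply_of_ae_eq_indicator hmono hge hmaps hV hb indicatorConstLp_coeFn)

end VolterraComposition

theorem stmt_17_general (φ : ℝ → ℝ)
    (hmono : StrictMonoOn φ (Icc 0 1))
    (hmaps : MapsTo φ (Icc 0 1) (Icc 0 1))
    (hge : ∀ x ∈ Icc (0:ℝ) 1, x ≤ φ x)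
    (μ : Measure ℝ) (hμ : μ = volume.restrict (Icc 0 1))
    (V : Lp ℝ 2 μ →L[ℝ] Lp ℝ 2 μ)
    (hV : ∀ f : Lp ℝ 2 μ, ∀ᵐ x ∂μ, (V f : ℝ → ℝ) x = ∫ t in (0:ℝ)..(φ x), (f : ℝ → ℝ) t)
    (a : ℝ) (ha : a ∈ Ioo (0:ℝ) 1)
    (fa : Lp ℝ 2 μ)
    (hfa : ∀ᵐ x ∂μ, (fa : ℝ → ℝ) x = Set.indicator (Ici a) (fun _ => (1:ℝ)) x) :
    (∀ x ∈ Icc (0:ℝ) 1,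
        (φ a - a) * Set.indicator (Ici a) (fun _ => (1:ℝ)) x ≤
          ∫ t in (0:ℝ)..(φ x), Set.indicator (Ici a) (fun _ => (1:ℝ)) t) ∧
    (∀ n : ℕ, (φ a - a) ^ n * ‖fa‖ ≤ ‖(V ^ n) fa‖) ∧
    ENNReal.ofReal (⨆ x ∈ Icc (0:ℝ) 1, (φ x - x)) ≤ spectralRadius ℝ V := by
  subst hμ
  have haI : a ∈ Icc (0:ℝ) 1 := Ioo_subset_Icc_self ha
  have hVmono : Monotone V := monotone_of_apply_ae_eq_integral hmaps hV
  refine ⟨fun x hx => mul_indicator_le_integral_indicator hmono.monotoneOn hge haI hx,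
    ContinuousLinearMap.pow_mul_norm_le_norm_pow_apply hVmono (sub_nonneg.mpr (hge a haI))
      (Lp.nonneg_of_ae_eq_indicator_one hfa)
      (smul_le_apply_of_ae_eq_indicator hmono.monotoneOn hge hmaps hV haI hfa), ?_⟩
  rcases eq_or_ne (spectralRadius ℝ V) ⊤ with hρ | hρ
  · simp [hρ]
  rw [ENNReal.ofReal_le_iff_le_toReal hρ]
  refine Real.iSup_le (fun x => Real.iSup_le (fun hx => ?_) ENNReal.toReal_nonneg)
    ENNReal.toReal_nonneg
  rw [← ENNReal.ofReal_le_iff_le_toReal hρ]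
  exact ofReal_sub_le_spectralRadius hmono.monotoneOn hge hmaps hV hx

theorem stmt_17 (φ : ℝ → ℝ)
    (hmono : StrictMonoOn φ (Icc 0 1))
    (hcont : ContinuousOn φ (Icc 0 1))
    (hmaps : MapsTo φ (Icc 0 1) (Icc 0 1))
    (hge : ∀ x ∈ Icc (0:ℝ) 1, x ≤ φ x)
    (μ : Measure ℝ) (hμ : μ = volume.restrict (Icc 0 1))
    (V : Lp ℝ 2 μ →L[ℝ] Lp ℝ 2 μ)
    (hV : ∀ f : Lp ℝ 2 μ, ∀ᵐ x ∂μ, (V f : ℝ → ℝ) x = ∫ t in (0:ℝ)..(φ x), (f : ℝ → ℝ) t)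
    (a : ℝ) (ha : a ∈ Ioo (0:ℝ) 1)
    (fa : Lp ℝ 2 μ)
    (hfa : ∀ᵐ x ∂μ, (fa : ℝ → ℝ) x = Set.indicator (Ici a) (fun _ => (1:ℝ)) x) :
    (∀ x ∈ Icc (0:ℝ) 1,
        (φ a - a) * Set.indicator (Ici a) (fun _ => (1:ℝ)) x ≤
          ∫ t in (0:ℝ)..(φ x), Set.indicator (Ici a) (fun _ => (1:ℝ)) t) ∧
    (∀ n : ℕ, (φ a - a) ^ n * ‖fa‖ ≤ ‖(V ^ n) fa‖) ∧
    ENNReal.ofReal (⨆ x ∈ Icc (0:ℝ) 1, (φ x - x)) ≤ spectralRadius ℝ V :=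
  stmt_17_general φ hmono hmaps hge μ hμ V hV a ha fa hfa
end
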